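/- Fix ℏ > 0 and an integer N ≥ 1. For all x, p ∈ ℝ, σ_{H_N}^ℏ(x,p) = p · σ_{P_{<N}}^ℏ(x,p) + (i/2) √(ℏN/2) ∫_ℝ ℏ [ψ_{N−1}^ℏ(x − ℏy/2) ψ_N^ℏ(x + ℏy/2) − ψ_N^ℏ(x − ℏy/2) ψ_{N−1}^ℏ(x + ℏy/2)] e^{ipy} dy. -/

import Mathlib

open MeasureTheory Filter

/-- Physicists' Hermite polynomial `h_k(y) = (-1)^k e^{y^2} (d/dy)^k e^{-y^2}`. -/
noncomputable def hermiteH (k : ℕ) (y : ℝ) : ℝ :=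
  (-1)^k * Real.exp (y^2) * iteratedDeriv k (fun t => Real.exp (-t^2)) y

/-- Hermite function `ψ_k^ℏ`. -/
noncomputable def psiH (hbar : ℝ) (k : ℕ) (x : ℝ) : ℝ :=
  (Real.sqrt (Real.sqrt Real.pi * 2^k * (Nat.factorial k) * Real.sqrt hbar))⁻¹ *
    Real.exp (-x^2 / (2*hbar)) * hermiteH k (x / Real.sqrt hbar)

/-- Kernel of the spectral projection `P_{<N}`. -/
noncomputable def KerK (hbar : ℝ) (N : ℕ) (u v : ℝ) : ℝ :=
  ∑ k ∈ Finset.range N, psiH hbar k u * psiH hbar k v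

/-- Kernel of the Zeno Hamiltonian `H_N = P_{<N} p̂ P_{<N}`. -/
noncomputable def KerQ (hbar : ℝ) (N : ℕ) (u v : ℝ) : ℂ :=
  Complex.I * (Real.sqrt (hbar/2) : ℂ) *
    ∑ j ∈ Finset.range (N-1), ((Real.sqrt ((j:ℝ)+1) : ℝ) : ℂ) *
      ((psiH hbar (j+1) u * psiH hbar j v - psiH hbar j u * psiH hbar (j+1) v : ℝ) : ℂ)

/-- Weyl symbol of `P_{<N}`. -/
noncomputable def sigmaP (hbar : ℝ) (N : ℕ) (x p : ℝ) : ℂ :=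
  ∫ y : ℝ, ((hbar * KerK hbar N (x - hbar*y/2) (x + hbar*y/2) : ℝ) : ℂ) *
    Complex.exp (Complex.I * (p:ℂ) * (y:ℂ))

/-- Weyl symbol of `H_N`. -/
noncomputable def sigmaH (hbar : ℝ) (N : ℕ) (x p : ℝ) : ℂ :=
  ∫ y : ℝ, (hbar : ℂ) * KerQ hbar N (x - hbar*y/2) (x + hbar*y/2) *
    Complex.exp (Complex.I * (p:ℂ) * (y:ℂ))

/-! The Hermite functions satisfy the ladder relation
`ψ_k' = √(k/2ℏ) ψ_{k-1} - √((k+1)/2ℏ) ψ_{k+1}`. Differentiating `y ↦ ℏ K_N(u, v)`, where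
`u = x - ℏy/2` and `v = x + ℏy/2`, with it, each pairing `ψ_{j+1}(u) ψ_j(v) - ψ_j(u) ψ_{j+1}(v)`
with `j < N - 1` appears twice and the top one (`j = N - 1`) once. Hence
`ℏ Q_N(u, v) = i ∂_y (ℏ K_N(u, v)) + (i/2) √(ℏN/2) B(y)` with `B` the boundary integrand, and
integrating by parts against `e^{ipy}` turns `i ∂_y` into multiplication by `p`.

The ladder relation comes from writing `ψ_k` through Mathlib's probabilists' Hermite polynomials,
`ψ_k(x) = (√π k! √ℏ)^{-1/2} e^{-s²/4} He_k(s)` with `s = √2 x / √ℏ`, and `He_k' = k He_{k-1}`;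
the same formula shows `ψ_k ∈ L²`, which makes every integrand integrable. -/

open Polynomial Finset

theorem Finset.sum_range_add_succ {R : Type*} [CommSemiring R] (g : ℕ → R) (h0 : g 0 = 0)
    (N : ℕ) :
    ∑ k ∈ range N, (g k + g (k + 1)) = 2 * ∑ k ∈ range (N - 1), g (k + 1) + g N := by
  cases N with
  | zero => simp [h0]
  | succ M =>
    rw [Finset.sum_add_distrib, Finset.sum_range_succ', Finset.sum_range_succ, h0,
      Nat.add_sub_cancel]
    ring

theorem hasDerivAt_sum_mul_of_ladder {ψ : ℕ → ℝ → ℝ} {a : ℕ → ℝ} (ha : a 0 = 0)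
    (hψ : ∀ k t, HasDerivAt (ψ k) (a k * ψ (k - 1) t - a (k + 1) * ψ (k + 1) t) t)
    {u v : ℝ → ℝ} {c y : ℝ} (hu : HasDerivAt u (-c) y) (hv : HasDerivAt v c y) (N : ℕ) :
    HasDerivAt (fun y => ∑ k ∈ range N, ψ k (u y) * ψ k (v y))
      (c * (2 * ∑ j ∈ range (N - 1),
          a (j + 1) * (ψ (j + 1) (u y) * ψ j (v y) - ψ j (u y) * ψ (j + 1) (v y))
        + a N * (ψ N (u y) * ψ (N - 1) (v y) - ψ (N - 1) (u y) * ψ N (v y)))) y := by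
  have h := HasDerivAt.fun_sum (u := range N) fun k _ =>
    ((hψ k (u y)).comp y hu).fun_mul ((hψ k (v y)).comp y hv)
  have hsum := Finset.sum_range_add_succ
    (fun k => a k * (ψ k (u y) * ψ (k - 1) (v y) - ψ (k - 1) (u y) * ψ k (v y)))
    (by simp [ha]) N
  simp only [Nat.add_sub_cancel] at hsum
  refine h.congr_deriv ?_
  rw [← hsum, Finset.mul_sum]
  refine Finset.sum_congr rfl fun k _ => ?_
  simp only [Function.comp_apply]
  ring

theorem MeasureTheory.Integrable.mul_cexp_I_mul {f : ℝ → ℂ} (hf : Integrable f) (p : ℝ) :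
    Integrable fun y => f y * Complex.exp (Complex.I * p * y) := by
  refine hf.mul_bdd (c := 1) (by fun_prop) (ae_of_all _ fun y => ?_)
  rw [show Complex.I * p * y = ((p * y : ℝ) : ℂ) * Complex.I by push_cast; ring,
    Complex.norm_exp_ofReal_mul_I]

theorem integral_deriv_mul_cexp {f f' : ℝ → ℂ} (hf : ∀ y, HasDerivAt f (f' y) y)
    (hfi : Integrable f) (hf'i : Integrable f') (p : ℝ) :
    ∫ y, f' y * Complex.exp (Complex.I * p * y)
      = -(Complex.I * p) * ∫ y, f y * Complex.exp (Complex.I * p * y) := by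
  have he (y : ℝ) : HasDerivAt (fun t : ℝ => Complex.exp (Complex.I * p * t))
      (Complex.I * p * Complex.exp (Complex.I * p * y)) y := by
    refine (((hasDerivAt_id (y : ℂ)).const_mul (Complex.I * p)).cexp.comp_ofReal).congr_deriv ?_
    simp only [id, mul_one]
    ring
  have hfe := hfi.mul_cexp_I_mul p
  have h := integral_mul_deriv_eq_deriv_mul_of_integrable (fun y _ => hf y) (fun y _ => he y)
    ((hfe.const_mul (Complex.I * p)).congr (ae_of_all _ fun y => by simp only [Pi.mul_apply]; ring))
    (hf'i.mul_cexp_I_mul p) hfe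
  simp only [mul_left_comm _ (Complex.I * p), integral_const_mul] at h
  linear_combination h

theorem integral_mul_cexp_eq_of_hasDerivAt {F G B : ℝ → ℂ} {c : ℂ}
    (hF : ∀ y, HasDerivAt F (-Complex.I * (G y - c * B y)) y)
    (hFi : Integrable F) (hGi : Integrable G) (hBi : Integrable B) (p : ℝ) :
    ∫ y, G y * Complex.exp (Complex.I * p * y)
      = p * (∫ y, F y * Complex.exp (Complex.I * p * y))
        + c * ∫ y, B y * Complex.exp (Complex.I * p * y) := by
  have h := integral_deriv_mul_cexp hF hFi ((hGi.sub (hBi.const_mul c)).const_mul _) p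
  have hsplit : ∫ y, -Complex.I * (G y - c * B y) * Complex.exp (Complex.I * p * y)
      = -Complex.I * ((∫ y, G y * Complex.exp (Complex.I * p * y))
        - c * ∫ y, B y * Complex.exp (Complex.I * p * y)) := by
    rw [← integral_const_mul c, ← integral_sub (hGi.mul_cexp_I_mul p)
      ((hBi.mul_cexp_I_mul p).const_mul c), ← integral_const_mul]
    congr 1 with y
    ring
  rw [hsplit, show -(Complex.I * p) = -Complex.I * p by ring, mul_assoc] at h
  linear_combination mul_left_cancel₀ (neg_ne_zero.2 Complex.I_ne_zero) h

theorem integrable_eval_mul_exp_neg_mul_sq (P : ℝ[X]) {b : ℝ} (hb : 0 < b) :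
    Integrable fun s => P.eval s * Real.exp (-b * s ^ 2) := by
  simp_rw [eval_eq_sum_range, Finset.sum_mul, mul_assoc]
  refine integrable_finsetSum _ fun i _ => (Integrable.const_mul ?_ _)
  simpa using integrable_rpow_mul_exp_neg_mul_sq hb (s := i)
    (by linarith [i.cast_nonneg (α := ℝ)])

theorem Polynomial.derivative_hermite_succ (n : ℕ) :
    derivative (hermite (n + 1)) = (n + 1 : ℤ[X]) * hermite n := by
  induction n with
  | zero => simp
  | succ n ih =>
    rw [hermite_succ (n + 1), derivative_sub, derivative_mul, ih, derivative_mul,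
      derivative_X, hermite_succ n]
    simp only [derivative_add, derivative_natCast, derivative_one]
    push_cast
    ring

theorem Polynomial.derivative_hermite (n : ℕ) :
    derivative (hermite n) = (n : ℤ[X]) * hermite (n - 1) := by
  cases n with
  | zero => simp
  | succ n => simpa using derivative_hermite_succ n

noncomputable def hermiteFun (k : ℕ) (s : ℝ) : ℝ :=
  Real.exp (-(s ^ 2 / 4)) * aeval s (hermite k)

theorem hasDerivAt_hermiteFun (k : ℕ) (s : ℝ) :
    HasDerivAt (hermiteFun k) ((k * hermiteFun (k - 1) s - hermiteFun (k + 1) s) / 2) s := by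
  have hexp : HasDerivAt (fun s : ℝ => Real.exp (-(s ^ 2 / 4)))
      (Real.exp (-(s ^ 2 / 4)) * -(s / 2)) s := by
    have h : HasDerivAt (fun s : ℝ => -(s ^ 2 / 4)) (-(s / 2)) s := by
      refine ((hasDerivAt_pow 2 s).div_const 4).fun_neg.congr_deriv ?_
      push_cast; ring
    exact h.exp
  refine (hexp.fun_mul ((hermite k).hasDerivAt_aeval s)).congr_deriv ?_
  simp only [hermiteFun, derivative_hermite, hermite_succ, map_mul, map_sub, map_natCast, aeval_X]
  ring

theorem integrable_hermiteFun_sq (k : ℕ) : Integrable fun s => hermiteFun k s ^ 2 := by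
  convert integrable_eval_mul_exp_neg_mul_sq ((hermite k).map (algebraMap ℤ ℝ) ^ 2)
    (b := 1 / 2) (by norm_num) using 2 with s
  rw [hermiteFun, mul_pow, ← Real.exp_nat_mul, eval_pow, eval_map_algebraMap]
  ring_nf

theorem hermiteH_eq_aeval_hermite (k : ℕ) (y : ℝ) :
    hermiteH k y = √2 ^ k * aeval (√2 * y) (hermite k) := by
  have hgauss : (fun t : ℝ => Real.exp (-t ^ 2)) = fun t => Real.exp (-((√2 * t) ^ 2 / 2)) := by
    ext t; rw [mul_pow, Real.sq_sqrt zero_le_two]; ring_nf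
  rw [hermiteH, hgauss,
    iteratedDeriv_comp_const_mul (f := fun s => Real.exp (-(s ^ 2 / 2))) (by fun_prop),
    iteratedDeriv_eq_iterate]
  dsimp only
  rw [deriv_gaussian_eq_hermite_mul_gaussian, mul_pow, Real.sq_sqrt zero_le_two]
  have hexp : Real.exp (y ^ 2) * Real.exp (-(2 * y ^ 2 / 2)) = 1 := by
    rw [← Real.exp_add]; ring_nf; exact Real.exp_zero
  have hsign : ((-1 : ℝ) ^ k) * (-1) ^ k = 1 := by rw [← mul_pow]; norm_num
  linear_combination √2 ^ k * aeval (√2 * y) (hermite k) * ((-1) ^ k * (-1) ^ k * hexp + hsign)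

noncomputable def psiNorm (hbar : ℝ) (k : ℕ) : ℝ :=
  (√(√Real.pi * k.factorial * √hbar))⁻¹

theorem sqrt_succ_mul_psiNorm_succ (hbar : ℝ) (k : ℕ) :
    √(k + 1) * psiNorm hbar (k + 1) = psiNorm hbar k := by
  have hk : √((k : ℝ) + 1) ≠ 0 := by positivity
  rw [psiNorm, psiNorm, Nat.factorial_succ, Nat.cast_mul, Nat.cast_succ,
    show √Real.pi * ((k + 1) * k.factorial) * √hbar
      = (k + 1) * (√Real.pi * k.factorial * √hbar) by ring,
    Real.sqrt_mul (by positivity), mul_inv, ← mul_assoc, mul_inv_cancel₀ hk, one_mul]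

theorem sqrt_mul_psiNorm_pred (hbar : ℝ) (k : ℕ) :
    √k * psiNorm hbar (k - 1) = k * psiNorm hbar k := by
  cases k with
  | zero => simp
  | succ j =>
    rw [Nat.add_sub_cancel, ← sqrt_succ_mul_psiNorm_succ, ← mul_assoc, Nat.cast_succ,
      Real.mul_self_sqrt (by positivity)]

theorem psiH_eq_psiNorm_mul_hermiteFun {hbar : ℝ} (hh : 0 ≤ hbar) (k : ℕ) (x : ℝ) :
    psiH hbar k x = psiNorm hbar k * hermiteFun k (√2 * (x / √hbar)) := by
  have hsqrt : √((2 : ℝ) ^ k) = √2 ^ k :=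
    (Real.sqrt_eq_iff_eq_sq (by positivity) (by positivity)).2
      (by rw [← pow_mul, mul_comm, pow_mul, Real.sq_sqrt zero_le_two])
  have hnorm :
      (√(√Real.pi * 2 ^ k * k.factorial * √hbar))⁻¹ * √2 ^ k = psiNorm hbar k := by
    rw [psiNorm, show √Real.pi * 2 ^ k * k.factorial * √hbar
      = 2 ^ k * (√Real.pi * k.factorial * √hbar) by ring, Real.sqrt_mul (by positivity),
      hsqrt, mul_inv, mul_right_comm, inv_mul_cancel₀ (by positivity), one_mul]
  have hexp : -x ^ 2 / (2 * hbar) = -((√2 * (x / √hbar)) ^ 2 / 4) := by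
    rw [mul_pow, div_pow, Real.sq_sqrt zero_le_two, Real.sq_sqrt hh]; ring
  rw [psiH, hermiteH_eq_aeval_hermite, hermiteFun, hexp, ← hnorm]
  ring

theorem hasDerivAt_psiH {hbar : ℝ} (hh : 0 < hbar) (k : ℕ) (t : ℝ) :
    HasDerivAt (psiH hbar k)
      (√(k / (2 * hbar)) * psiH hbar (k - 1) t - √((k + 1) / (2 * hbar)) * psiH hbar (k + 1) t)
      t := by
  set γ := √2 * (1 / √hbar) with hγ
  have hsqrt (a : ℝ) (ha : 0 ≤ a) : √(a / (2 * hbar)) = √a * γ / 2 := by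
    rw [Real.sqrt_div' _ (by positivity), Real.sqrt_mul zero_le_two, hγ]
    field_simp
    rw [Real.sq_sqrt zero_le_two]
  have hpsi : psiH hbar k = fun x => psiNorm hbar k * hermiteFun k (√2 * (x / √hbar)) :=
    funext (psiH_eq_psiNorm_mul_hermiteFun hh.le k)
  have hinner : HasDerivAt (fun x => √2 * (x / √hbar)) γ t :=
    ((hasDerivAt_id t).div_const _).const_mul _
  rw [hpsi]
  refine (((hasDerivAt_hermiteFun k _).comp t hinner).const_mul _).congr_deriv ?_
  rw [hsqrt k k.cast_nonneg, hsqrt (k + 1) (by positivity),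
    psiH_eq_psiNorm_mul_hermiteFun hh.le, psiH_eq_psiNorm_mul_hermiteFun hh.le]
  linear_combination
    (γ / 2 * hermiteFun (k + 1) (√2 * (t / √hbar))) * sqrt_succ_mul_psiNorm_succ hbar k
      - (γ / 2 * hermiteFun (k - 1) (√2 * (t / √hbar))) * sqrt_mul_psiNorm_pred hbar k

theorem continuous_psiH {hbar : ℝ} (hh : 0 < hbar) (k : ℕ) : Continuous (psiH hbar k) :=
  continuous_iff_continuousAt.2 fun t => (hasDerivAt_psiH hh k t).continuousAt

theorem integrable_psiH_sq {hbar : ℝ} (hh : 0 < hbar) (k : ℕ) :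
    Integrable fun x => psiH hbar k x ^ 2 := by
  have h := (((integrable_hermiteFun_sq k).comp_mul_left' (by positivity : √2 ≠ 0)).comp_div
    (by positivity : √hbar ≠ 0)).const_mul (psiNorm hbar k ^ 2)
  refine h.congr (ae_of_all _ fun x => ?_)
  simp only [psiH_eq_psiNorm_mul_hermiteFun hh.le, mul_pow]

theorem memLp_psiH_comp {hbar : ℝ} (hh : 0 < hbar) (k : ℕ) (x : ℝ) {c : ℝ} (hc : c ≠ 0) :
    MemLp (fun y => psiH hbar k (x + c * y)) 2 :=
  (memLp_two_iff_integrable_sq ((continuous_psiH hh k).comp (by fun_prop)).aestronglyMeasurable).2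
    (((integrable_psiH_sq hh k).comp_add_left x).comp_mul_left' hc)

theorem integrable_psiH_mul_psiH {hbar : ℝ} (hh : 0 < hbar) (j k : ℕ) (x : ℝ) :
    Integrable fun y => psiH hbar j (x - hbar * y / 2) * psiH hbar k (x + hbar * y / 2) := by
  have hj := memLp_psiH_comp hh j x (c := -(hbar / 2)) (neg_ne_zero.2 (by positivity))
  have h := hj.integrable_mul (memLp_psiH_comp hh k x (c := hbar / 2) (by positivity))
  convert h using 2 with y
  simp only [Pi.mul_apply]
  ring_nf

theorem mul_sqrt_div_two_mul {hbar : ℝ} (hh : 0 < hbar) (t : ℝ) :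
    hbar * √(t / (2 * hbar)) = √(hbar * t / 2) := by
  rw [← Real.sqrt_sq hh.le, ← Real.sqrt_mul (sq_nonneg _), Real.sqrt_sq hh.le]
  congr 1
  field_simp

theorem ladder_sum_psiH_eq_kerQ_sub_boundary {hbar : ℝ} (hh : 0 < hbar) (N : ℕ) (u v : ℝ) :
    hbar / 2 * (2 * ∑ j ∈ range (N - 1), √((j + 1 : ℕ) / (2 * hbar)) *
        (psiH hbar (j + 1) u * psiH hbar j v - psiH hbar j u * psiH hbar (j + 1) v)
      + √(N / (2 * hbar)) *
        (psiH hbar N u * psiH hbar (N - 1) v - psiH hbar (N - 1) u * psiH hbar N v))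
    = √(hbar / 2) * ∑ j ∈ range (N - 1), √(j + 1) *
        (psiH hbar (j + 1) u * psiH hbar j v - psiH hbar j u * psiH hbar (j + 1) v)
      - √(hbar * N / 2) / 2 *
        (psiH hbar (N - 1) u * psiH hbar N v - psiH hbar N u * psiH hbar (N - 1) v) := by
  have hsum : hbar * ∑ j ∈ range (N - 1), √((j + 1 : ℕ) / (2 * hbar)) *
        (psiH hbar (j + 1) u * psiH hbar j v - psiH hbar j u * psiH hbar (j + 1) v)
      = √(hbar / 2) * ∑ j ∈ range (N - 1), √(j + 1) *
        (psiH hbar (j + 1) u * psiH hbar j v - psiH hbar j u * psiH hbar (j + 1) v) := by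
    rw [mul_sum, mul_sum]
    refine sum_congr rfl fun j _ => ?_
    rw [← mul_assoc, ← mul_assoc, mul_sqrt_div_two_mul hh, ← Real.sqrt_mul (by positivity)]
    push_cast
    ring_nf
  linear_combination hsum + (1 / 2 * (psiH hbar N u * psiH hbar (N - 1) v
    - psiH hbar (N - 1) u * psiH hbar N v)) * mul_sqrt_div_two_mul hh N

theorem hasDerivAt_kerK {hbar : ℝ} (hh : 0 < hbar) (N : ℕ) (x y : ℝ) :
    HasDerivAt (fun y => ((hbar * KerK hbar N (x - hbar * y / 2) (x + hbar * y / 2) : ℝ) : ℂ))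
      (-Complex.I * (hbar * KerQ hbar N (x - hbar * y / 2) (x + hbar * y / 2)
        - Complex.I / 2 * √(hbar * N / 2) *
          ((hbar * (psiH hbar (N - 1) (x - hbar * y / 2) * psiH hbar N (x + hbar * y / 2)
            - psiH hbar N (x - hbar * y / 2) * psiH hbar (N - 1) (x + hbar * y / 2)) : ℝ) : ℂ)))
      y := by
  have hu : HasDerivAt (fun y => x - hbar * y / 2) (-(hbar / 2)) y :=
    (((hasDerivAt_id y).const_mul hbar).div_const 2).const_sub x |>.congr_deriv (by ring)
  have hv : HasDerivAt (fun y => x + hbar * y / 2) (hbar / 2) y :=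
    (((hasDerivAt_id y).const_mul hbar).div_const 2).const_add x |>.congr_deriv (by ring)
  have h := hasDerivAt_sum_mul_of_ladder (ψ := psiH hbar) (a := fun k => √(k / (2 * hbar)))
    (by simp) (fun k t => by simpa only [Nat.cast_succ] using hasDerivAt_psiH hh k t) hu hv N
  refine ((h.const_mul hbar).ofReal_comp).congr_deriv ?_
  rw [ladder_sum_psiH_eq_kerQ_sub_boundary hh, KerQ]
  push_cast
  ring_nf
  rw [Complex.I_sq]
  ring

theorem integrable_kerK {hbar : ℝ} (hh : 0 < hbar) (N : ℕ) (x : ℝ) :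
    Integrable fun y => KerK hbar N (x - hbar * y / 2) (x + hbar * y / 2) :=
  integrable_finsetSum _ fun k _ => integrable_psiH_mul_psiH hh k k x

theorem integrable_kerQ {hbar : ℝ} (hh : 0 < hbar) (N : ℕ) (x : ℝ) :
    Integrable fun y => KerQ hbar N (x - hbar * y / 2) (x + hbar * y / 2) :=
  (integrable_finsetSum _ fun j _ => (((integrable_psiH_mul_psiH hh (j + 1) j x).sub
    (integrable_psiH_mul_psiH hh j (j + 1) x)).ofReal).const_mul _).const_mul _

theorem sigmaH_eq_p_sigmaP_plus_boundary_general (hbar : ℝ) (hh : 0 < hbar) (N : ℕ)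
    (x p : ℝ) :
    sigmaH hbar N x p = (p : ℂ) * sigmaP hbar N x p +
      (Complex.I / 2) * (Real.sqrt (hbar * N / 2) : ℂ) *
        ∫ y : ℝ,
          ((hbar * (psiH hbar (N-1) (x - hbar*y/2) * psiH hbar N (x + hbar*y/2)
            - psiH hbar N (x - hbar*y/2) * psiH hbar (N-1) (x + hbar*y/2)) : ℝ) : ℂ) *
            Complex.exp (Complex.I * (p:ℂ) * (y:ℂ)) := by
  rw [sigmaH, sigmaP]
  exact integral_mul_cexp_eq_of_hasDerivAt (hasDerivAt_kerK hh N x)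
    ((integrable_kerK hh N x).const_mul hbar).ofReal ((integrable_kerQ hh N x).const_mul _)
    ((((integrable_psiH_mul_psiH hh (N - 1) N x).sub
      (integrable_psiH_mul_psiH hh N (N - 1) x)).const_mul hbar).ofReal) p

/-- The Weyl symbol of `H_N` differs from `p·σ_{P_{<N}}^ℏ(x,p)` by an explicit
boundary term built from the `N`-th and `(N-1)`-th Hermite functions. -/
theorem sigmaH_eq_p_sigmaP_plus_boundary (hbar : ℝ) (hh : 0 < hbar) (N : ℕ) (hN : 1 ≤ N)
    (x p : ℝ) :
    sigmaH hbar N x p = (p : ℂ) * sigmaP hbar N x p +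
      (Complex.I / 2) * (Real.sqrt (hbar * N / 2) : ℂ) *
        ∫ y : ℝ,
          ((hbar * (psiH hbar (N-1) (x - hbar*y/2) * psiH hbar N (x + hbar*y/2)
            - psiH hbar N (x - hbar*y/2) * psiH hbar (N-1) (x + hbar*y/2)) : ℝ) : ℂ) *
            Complex.exp (Complex.I * (p:ℂ) * (y:ℂ)) :=
  sigmaH_eq_p_sigmaP_plus_boundary_general hbar hh N x p
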